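/- Context closure of implication: for all graphs G and H and every context C[·]_R, if G ⊸ H is provable in GS then C[G]_R ⊸ C[H]_R is provable in GS. -/

import Mathlib

/-!
Both sides are compositions along the graph `C[x]_R` obtained by plugging a single vertex `x`:
`C[Y]_R` puts `Y` at `x` and every other vertex at itself. So it suffices that composition along
an arbitrary graph `P` preserves provable implication. This goes by induction on `|P|` through
modular decomposition. If `P` is the par or the tensor of two nonempty graphs, the derived tensor
rule (an insertion followed by ss↓) applies. Otherwise the maximal proper modules of `P` partition
it, the quotient by them is prime with at least four vertices, and p↓ applies to it.

The rule p↓ needs nonempty components, which fails only when `G = ∅`. Then `⊢ H`, and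
`C̄ ⅋ C[H]_R` is obtained from the identity `⊢ C̄ ⅋ C` (the case of atomic components) by
inserting `H`.
-/

namespace GSP

/-- Atoms: a propositional variable (coded by a natural number) with a polarity. -/
abbrev Atom := ℕ × Bool

/-- The dual atom. -/
def dualAtom (a : Atom) : Atom := (a.1, !a.2)

/-- A finite, simple, undirected graph whose vertices are labelled by atoms. -/
structure LGraph where
  V : Type
  [fintype : Fintype V]
  adj : V → V → Prop
  symm : ∀ {v w : V}, adj v w → adj w v
  irrefl : ∀ v : V, ¬ adj v v
  label : V → Atom

attribute [instance] LGraph.fintype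

namespace LGraph

/-- An isomorphism of labelled graphs: a vertex bijection preserving labels and
preserving and reflecting edges. -/
structure Iso (G H : LGraph) where
  toEquiv : G.V ≃ H.V
  adj_iff : ∀ v w : G.V, G.adj v w ↔ H.adj (toEquiv v) (toEquiv w)
  label_eq : ∀ v : G.V, H.label (toEquiv v) = G.label v

/-- `G ≅ H` : the graphs `G` and `H` are isomorphic. -/
def iso (G H : LGraph) : Prop := Nonempty (Iso G H)

/-- The empty graph. -/
def empty : LGraph where
  V := Empty
  adj _ _ := False
  symm h := h.elim
  irrefl v := v.elim
  label v := v.elim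

/-- The single-vertex graph labelled by the atom `a`. -/
def single (a : Atom) : LGraph where
  V := Unit
  adj _ _ := False
  symm h := h.elim
  irrefl _ h := h
  label _ := a

def parAdj (G H : LGraph) : G.V ⊕ H.V → G.V ⊕ H.V → Prop
  | .inl a, .inl b => G.adj a b
  | .inr a, .inr b => H.adj a b
  | _, _ => False

/-- The par `G ⅋ H` : disjoint union of `G` and `H`. -/
def par (G H : LGraph) : LGraph where
  V := G.V ⊕ H.V
  adj := parAdj G H
  symm := by
    rintro (a | a) (b | b) h
    · exact G.symm h
    · exact h.elim
    · exact h.elim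
    · exact H.symm h
  irrefl := by
    rintro (a | a) h
    · exact G.irrefl a h
    · exact H.irrefl a h
  label := Sum.elim G.label H.label

def tensorAdj (G H : LGraph) : G.V ⊕ H.V → G.V ⊕ H.V → Prop
  | .inl a, .inl b => G.adj a b
  | .inr a, .inr b => H.adj a b
  | .inl _, .inr _ => True
  | .inr _, .inl _ => True

/-- The tensor `G ⊗ H` : join of `G` and `H` (disjoint union plus all edges in between). -/
def tensor (G H : LGraph) : LGraph where
  V := G.V ⊕ H.V
  adj := tensorAdj G H
  symm := by
    rintro (a | a) (b | b) h
    · exact G.symm h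
    · exact trivial
    · exact trivial
    · exact H.symm h
  irrefl := by
    rintro (a | a) h
    · exact G.irrefl a h
    · exact H.irrefl a h
  label := Sum.elim G.label H.label

/-- The dual graph `Ḡ` : same vertices, complemented edges, dualized labels. -/
def dual (G : LGraph) : LGraph where
  V := G.V
  adj v w := v ≠ w ∧ ¬ G.adj v w
  symm h := ⟨fun e => h.1 e.symm, fun h' => h.2 (G.symm h')⟩
  irrefl _ h := h.1 rfl
  label v := dualAtom (G.label v)

def plugAdj (C : LGraph) (R : Set C.V) (X : LGraph) : C.V ⊕ X.V → C.V ⊕ X.V → Prop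
  | .inl a, .inl b => C.adj a b
  | .inr a, .inr b => X.adj a b
  | .inl a, .inr _ => a ∈ R
  | .inr _, .inl b => b ∈ R

/-- `C[X]_R` : the graph obtained from the context `C[·]_R` by inserting the graph `X`
as a module whose vertices are adjacent exactly to the vertices in `R`. -/
def plug (C : LGraph) (R : Set C.V) (X : LGraph) : LGraph where
  V := C.V ⊕ X.V
  adj := plugAdj C R X
  symm := by
    rintro (a | a) (b | b) h
    · exact C.symm h
    · exact h
    · exact h
    · exact X.symm h
  irrefl := by
    rintro (a | a) h
    · exact C.irrefl a h
    · exact X.irrefl a h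
  label := Sum.elim C.label X.label

def compAdj (G : LGraph) (H : G.V → LGraph) :
    (Σ v : G.V, (H v).V) → (Σ v : G.V, (H v).V) → Prop := fun x y =>
  (∃ (v : G.V) (a b : (H v).V), x = ⟨v, a⟩ ∧ y = ⟨v, b⟩ ∧ (H v).adj a b) ∨
    (x.1 ≠ y.1 ∧ G.adj x.1 y.1)

/-- The composition `G⟨H v₁, …, H vₙ⟩` of the family `H` via the graph `G`:
replace each vertex `v` of `G` by the graph `H v`. -/
def comp (G : LGraph) (H : G.V → LGraph) : LGraph where
  V := Σ v : G.V, (H v).V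
  adj := compAdj G H
  symm := by
    rintro x y (⟨v, a, b, hx, hy, hab⟩ | ⟨hne, hadj⟩)
    · exact Or.inl ⟨v, b, a, hy, hx, (H v).symm hab⟩
    · exact Or.inr ⟨hne.symm, G.symm hadj⟩
  irrefl := by
    rintro ⟨v, a⟩ (⟨w, x, y, hx, hy, hxy⟩ | ⟨hne, _⟩)
    · have h := hx.symm.trans hy
      obtain rfl : x = y := by simpa using h
      exact (H w).irrefl x hxy
    · exact hne rfl
  label x := (H x.1).label x.2

/-- A module of `G` : a set `M` of vertices such that every vertex outside `M`
is adjacent either to all vertices of `M` or to none of them. -/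
def IsModule (G : LGraph) (M : Set G.V) : Prop :=
  ∀ v ∉ M, ∀ x ∈ M, ∀ y ∈ M, (G.adj v x ↔ G.adj v y)

/-- A prime graph: at least 2 vertices and only trivial modules. -/
def Prime (G : LGraph) : Prop :=
  2 ≤ Fintype.card G.V ∧
    ∀ M : Set G.V, G.IsModule M → M = ∅ ∨ (∃ v, M = {v}) ∨ M = Set.univ

/-- `G` is `P₄`-free: no four distinct vertices induce a path on 4 vertices. -/
def P4Free (G : LGraph) : Prop :=
  ¬ ∃ v₁ v₂ v₃ v₄ : G.V,
      v₁ ≠ v₂ ∧ v₁ ≠ v₃ ∧ v₁ ≠ v₄ ∧ v₂ ≠ v₃ ∧ v₂ ≠ v₄ ∧ v₃ ≠ v₄ ∧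
      G.adj v₁ v₂ ∧ G.adj v₂ v₃ ∧ G.adj v₃ v₄ ∧
      ¬ G.adj v₁ v₃ ∧ ¬ G.adj v₁ v₄ ∧ ¬ G.adj v₂ v₄

end LGraph

open LGraph

/-- The `n`-fold tensor `X₁ ⊗ ⋯ ⊗ Xₙ`. -/
def bigTensor : (n : ℕ) → (Fin n → LGraph) → LGraph
  | 0, _ => LGraph.empty
  | n + 1, F => (F 0).tensor (bigTensor n fun i => F i.succ)

/-- The `n`-fold par `X₁ ⅋ ⋯ ⅋ Xₙ`. -/
def bigPar : (n : ℕ) → (Fin n → LGraph) → LGraph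
  | 0, _ => LGraph.empty
  | n + 1, F => (F 0).par (bigPar n fun i => F i.succ)

/-- The inference rules of system GS (premise, conclusion). -/
inductive GSRule : LGraph → LGraph → Prop
  /-- ai↓ : premise `∅`, conclusion `ā ⅋ a`. -/
  | ai (a : Atom) : GSRule LGraph.empty ((single (dualAtom a)).par (single a))
  /-- ss↓ : premise `B[A]_S`, conclusion `B ⅋ A`, for `A ≠ ∅` and `S ≠ ∅`. -/
  | ss (A B : LGraph) (S : Set B.V) :
      Nonempty A.V → S ≠ ∅ → GSRule (B.plug S A) (B.par A)
  /-- p↓ : premise `(M₁ ⅋ N₁) ⊗ ⋯ ⊗ (Mₙ ⅋ Nₙ)`, conclusion `P̄⟨M₁,…,Mₙ⟩ ⅋ P⟨N₁,…,Nₙ⟩`,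
  for `P` prime with `n = |V(P)| ≥ 4` and all `Mᵢ ≠ ∅`. -/
  | p (n : ℕ) (P : LGraph) (e : P.V ≃ Fin n) (M N : Fin n → LGraph) :
      P.Prime → 4 ≤ n → (∀ i, Nonempty (M i).V) →
      GSRule (bigTensor n fun i => (M i).par (N i))
        ((P.dual.comp fun v => M (e v)).par (P.comp fun v => N (e v)))

/-- The "up" rules ai↑, ss↑, p↑ (premise, conclusion). -/
inductive UpRule : LGraph → LGraph → Prop
  /-- ai↑ : premise `a ⊗ ā`, conclusion `∅`. -/
  | ai (a : Atom) : UpRule ((single a).tensor (single (dualAtom a))) LGraph.empty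
  /-- ss↑ : premise `B ⊗ A`, conclusion `B[A]_S`, for `A ≠ ∅` and `S ≠ V(B)`. -/
  | ss (A B : LGraph) (S : Set B.V) :
      Nonempty A.V → S ≠ Set.univ → UpRule (B.tensor A) (B.plug S A)
  /-- p↑ : premise `P⟨M₁,…,Mₙ⟩ ⊗ P̄⟨N₁,…,Nₙ⟩`, conclusion `(M₁ ⊗ N₁) ⅋ ⋯ ⅋ (Mₙ ⊗ Nₙ)`,
  for `P` prime with `n = |V(P)| ≥ 4` and all `Mᵢ ≠ ∅`. -/
  | p (n : ℕ) (P : LGraph) (e : P.V ≃ Fin n) (M N : Fin n → LGraph) :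
      P.Prime → 4 ≤ n → (∀ i, Nonempty (M i).V) →
      UpRule ((P.comp fun v => M (e v)).tensor (P.dual.comp fun v => N (e v)))
        (bigPar n fun i => (M i).tensor (N i))

/-- The rules of system SGS : the rules of GS together with their duals. -/
def SGSRule (G H : LGraph) : Prop := GSRule G H ∨ UpRule G H

/-- A single inference step in a system: inside some context, replace a module
isomorphic to the premise of a rule by the corresponding conclusion. -/
def Step (Rules : LGraph → LGraph → Prop) (G H : LGraph) : Prop :=
  ∃ (C : LGraph) (R : Set C.V) (p c : LGraph),
    Rules p c ∧ G.iso (C.plug R p) ∧ H.iso (C.plug R c)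

/-- A derivation in a system from `G` to `H` : a finite sequence of inference steps
and isomorphisms leading from `G` to `H`. -/
def Deriv (Rules : LGraph → LGraph → Prop) (G H : LGraph) : Prop :=
  Relation.ReflTransGen (fun X Y => X.iso Y ∨ Step Rules X Y) G H

/-- A graph is provable in a system if there is a derivation from `∅` to it. -/
def Provable (Rules : LGraph → LGraph → Prop) (G : LGraph) : Prop :=
  Deriv Rules LGraph.empty G

/-- Formulas: unit, positive and negative atoms, par and tensor. -/
inductive Formula where
  | unit : Formula
  | pos (a : ℕ) : Formula
  | neg (a : ℕ) : Formula
  | par (φ ψ : Formula) : Formula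
  | tens (φ ψ : Formula) : Formula

/-- The graph `[φ]` of a formula `φ`. -/
def Formula.graph : Formula → LGraph
  | .unit => LGraph.empty
  | .pos a => single (a, true)
  | .neg a => single (a, false)
  | .par φ ψ => φ.graph.par ψ.graph
  | .tens φ ψ => φ.graph.tensor ψ.graph

/-- Structural equivalence of formulas: the smallest congruence making `⅋` and `⊗`
associative and commutative with unit `∘`. -/
inductive Formula.equiv : Formula → Formula → Prop
  | refl (φ) : Formula.equiv φ φ
  | symm {φ ψ} : Formula.equiv φ ψ → Formula.equiv ψ φ
  | trans {φ ψ χ} : Formula.equiv φ ψ → Formula.equiv ψ χ → Formula.equiv φ χ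
  | parComm (φ ψ) : Formula.equiv (.par φ ψ) (.par ψ φ)
  | parAssoc (φ ψ χ) : Formula.equiv (.par φ (.par ψ χ)) (.par (.par φ ψ) χ)
  | parUnit (φ) : Formula.equiv (.par φ .unit) φ
  | tensComm (φ ψ) : Formula.equiv (.tens φ ψ) (.tens ψ φ)
  | tensAssoc (φ ψ χ) : Formula.equiv (.tens φ (.tens ψ χ)) (.tens (.tens φ ψ) χ)
  | tensUnit (φ) : Formula.equiv (.tens φ .unit) φ
  | parCongr {φ φ' ψ ψ'} : Formula.equiv φ φ' → Formula.equiv ψ ψ' →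
      Formula.equiv (.par φ ψ) (.par φ' ψ')
  | tensCongr {φ φ' ψ ψ'} : Formula.equiv φ φ' → Formula.equiv ψ ψ' →
      Formula.equiv (.tens φ ψ) (.tens φ' ψ')

/-- A formula is unit-free if it contains no occurrence of the unit `∘`. -/
def Formula.UnitFree : Formula → Prop
  | .unit => False
  | .pos _ => True
  | .neg _ => True
  | .par φ ψ => φ.UnitFree ∧ ψ.UnitFree
  | .tens φ ψ => φ.UnitFree ∧ ψ.UnitFree

/-- The sequent calculus MLL° (multiplicative linear logic with mix) on multisets
of formulas. -/
inductive MLL : Multiset Formula → Prop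
  | ax (a : ℕ) : MLL {Formula.pos a, Formula.neg a}
  | tens {Γ Δ : Multiset Formula} (φ ψ : Formula) :
      MLL (φ ::ₘ Γ) → MLL (ψ ::ₘ Δ) → MLL (Formula.tens φ ψ ::ₘ (Γ + Δ))
  | par {Γ : Multiset Formula} (φ ψ : Formula) :
      MLL (φ ::ₘ ψ ::ₘ Γ) → MLL (Formula.par φ ψ ::ₘ Γ)
  | mix {Γ Δ : Multiset Formula} : MLL Γ → MLL Δ → MLL (Γ + Δ)

namespace LGraph

namespace Iso

variable {G H K : LGraph}

def refl (G : LGraph) : Iso G G := ⟨Equiv.refl _, fun _ _ => Iff.rfl, fun _ => rfl⟩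

def symm (f : Iso G H) : Iso H G where
  toEquiv := f.toEquiv.symm
  adj_iff v w := by simpa using (f.adj_iff (f.toEquiv.symm v) (f.toEquiv.symm w)).symm
  label_eq v := by simpa using (f.label_eq (f.toEquiv.symm v)).symm

def trans (f : Iso G H) (g : Iso H K) : Iso G K where
  toEquiv := f.toEquiv.trans g.toEquiv
  adj_iff v w := (f.adj_iff v w).trans (g.adj_iff _ _)
  label_eq v := (g.label_eq _).trans (f.label_eq v)

end Iso

noncomputable def induce (X : LGraph) (A : Set X.V) : LGraph where
  V := A
  fintype := Fintype.ofFinite _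
  adj a b := X.adj a.1 b.1
  symm h := X.symm h
  irrefl a := X.irrefl a.1
  label a := X.label a.1

lemma card_induce_lt {X : LGraph} {A : Set X.V} (hA : A ≠ Set.univ) :
    Fintype.card (X.induce A).V < Fintype.card X.V := by
  classical
  obtain ⟨x, hx⟩ := (Set.ne_univ_iff_exists_notMem A).mp hA
  exact (Fintype.card_congr (Equiv.refl _) :
    Fintype.card (X.induce A).V = Fintype.card A).trans_lt (Fintype.card_subtype_lt hx)

lemma comp_adj_same {P : LGraph} {K : P.V → LGraph} {v : P.V} (a b : (K v).V) :
    (P.comp K).adj ⟨v, a⟩ ⟨v, b⟩ ↔ (K v).adj a b := by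
  refine ⟨?_, fun h => Or.inl ⟨v, a, b, rfl, rfl, h⟩⟩
  rintro (⟨w, x, y, hx, hy, hxy⟩ | ⟨hne, _⟩)
  · obtain ⟨rfl, hx⟩ := Sigma.mk.inj_iff.mp hx
    obtain rfl := eq_of_heq hx
    obtain rfl := eq_of_heq (Sigma.mk.inj_iff.mp hy).2
    exact hxy
  · exact absurd rfl hne

lemma comp_adj_ne {P : LGraph} {K : P.V → LGraph} {v w : P.V} (a : (K v).V) (b : (K w).V)
    (h : v ≠ w) : (P.comp K).adj ⟨v, a⟩ ⟨w, b⟩ ↔ P.adj v w := by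
  refine ⟨?_, fun hvw => Or.inr ⟨h, hvw⟩⟩
  rintro (⟨u, x, y, hx, hy, _⟩ | ⟨_, hvw⟩)
  · exact absurd ((Sigma.mk.inj_iff.mp hx).1.trans (Sigma.mk.inj_iff.mp hy).1.symm) h
  · exact hvw

variable {G G' H H' C X : LGraph}

def parCongr (f : Iso G G') (g : Iso H H') : Iso (G.par H) (G'.par H') where
  toEquiv := Equiv.sumCongr f.toEquiv g.toEquiv
  adj_iff := by
    rintro (a | a) (b | b)
    exacts [f.adj_iff a b, Iff.rfl, Iff.rfl, g.adj_iff a b]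
  label_eq := by
    rintro (a | a)
    exacts [f.label_eq a, g.label_eq a]

def dualCongr (f : Iso G H) : Iso G.dual H.dual where
  toEquiv := f.toEquiv
  adj_iff v w := and_congr f.toEquiv.injective.ne_iff.symm (not_congr (f.adj_iff v w))
  label_eq v := congrArg dualAtom (f.label_eq v)

def plugCongr (S : Set C.V) (f : Iso X H) : Iso (C.plug S X) (C.plug S H) where
  toEquiv := Equiv.sumCongr (Equiv.refl _) f.toEquiv
  adj_iff := by
    rintro (a | a) (b | b)
    exacts [Iff.rfl, Iff.rfl, Iff.rfl, f.adj_iff a b]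
  label_eq := by
    rintro (a | a)
    exacts [rfl, f.label_eq a]

def parComm (G H : LGraph) : Iso (G.par H) (H.par G) where
  toEquiv := Equiv.sumComm _ _
  adj_iff := by rintro (a | a) (b | b) <;> exact Iff.rfl
  label_eq := by rintro (a | a) <;> rfl

def parLeftComm (G H K : LGraph) : Iso (G.par (H.par K)) (H.par (G.par K)) where
  toEquiv := (Equiv.sumAssoc _ _ _).symm.trans
    ((Equiv.sumCongr (Equiv.sumComm _ _) (Equiv.refl _)).trans (Equiv.sumAssoc _ _ _))
  adj_iff := by rintro (a | a | a) (b | b | b) <;> exact Iff.rfl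
  label_eq := by rintro (a | a | a) <;> rfl

def isoEmpty (G : LGraph) [IsEmpty G.V] : Iso G empty where
  toEquiv := Equiv.equivEmpty G.V
  adj_iff v := isEmptyElim v
  label_eq v := isEmptyElim v

def emptyParIso (G H : LGraph) [IsEmpty G.V] : Iso (G.par H) H where
  toEquiv := Equiv.emptySum G.V H.V
  adj_iff := by rintro (a | a) (b | b) <;> first | exact isEmptyElim ‹G.V› | exact Iff.rfl
  label_eq := by rintro (a | a) <;> first | exact isEmptyElim ‹G.V› | rfl

def parEmptyIso (G H : LGraph) [IsEmpty H.V] : Iso (G.par H) G where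
  toEquiv := Equiv.sumEmpty G.V H.V
  adj_iff := by rintro (a | a) (b | b) <;> first | exact isEmptyElim ‹H.V› | exact Iff.rfl
  label_eq := by rintro (a | a) <;> first | exact isEmptyElim ‹H.V› | rfl

def emptyPlugIso (C X : LGraph) (R : Set C.V) [IsEmpty C.V] : Iso (C.plug R X) X where
  toEquiv := Equiv.emptySum C.V X.V
  adj_iff := by rintro (a | a) (b | b) <;> first | exact isEmptyElim ‹C.V› | exact Iff.rfl
  label_eq := by rintro (a | a) <;> first | exact isEmptyElim ‹C.V› | rfl

def plugEmptyIso (C X : LGraph) (R : Set C.V) [IsEmpty X.V] : Iso (C.plug R X) C where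
  toEquiv := Equiv.sumEmpty C.V X.V
  adj_iff := by rintro (a | a) (b | b) <;> first | exact isEmptyElim ‹X.V› | exact Iff.rfl
  label_eq := by rintro (a | a) <;> first | exact isEmptyElim ‹X.V› | rfl

def plugEmptySetIso (C X : LGraph) : Iso (C.plug ∅ X) (C.par X) where
  toEquiv := Equiv.refl _
  adj_iff := by rintro (a | a) (b | b) <;> exact Iff.rfl
  label_eq := by rintro (a | a) <;> rfl

def plugUnivIso (C X : LGraph) : Iso (C.plug Set.univ X) (C.tensor X) where
  toEquiv := Equiv.refl _
  adj_iff := by rintro (a | a) (b | b) <;> exact Iff.rfl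
  label_eq := by rintro (a | a) <;> rfl

def plugPlugIso (C D X : LGraph) (S : Set C.V) (U : Set D.V) :
    Iso (C.plug S (D.plug U X)) ((C.plug S D).plug {w | Sum.elim (· ∈ S) (· ∈ U) w} X) where
  toEquiv := (Equiv.sumAssoc C.V D.V X.V).symm
  adj_iff := by rintro (a | a | a) (b | b | b) <;> exact Iff.rfl
  label_eq := by rintro (a | a | a) <;> rfl

def plugParParIso (A B C D : LGraph) :
    Iso ((A.par B).plug (Set.range Sum.inl) (C.par D))
      (B.par ((A.tensor C).plug (Set.range Sum.inl) D)) where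
  toEquiv :=
    { toFun := Sum.elim (Sum.elim (fun a => .inr (.inl (.inl a))) .inl)
        (Sum.elim (fun c => .inr (.inl (.inr c))) (fun d => .inr (.inr d)))
      invFun := Sum.elim (fun b => .inl (.inr b))
        (Sum.elim (Sum.elim (fun a => .inl (.inl a)) (fun c => .inr (.inl c)))
          (fun d => .inr (.inr d)))
      left_inv := by rintro ((a | a) | (a | a)) <;> rfl
      right_inv := by rintro (a | (a | a) | a) <;> rfl }
  adj_iff := by
    rintro ((a | a) | (a | a)) ((b | b) | (b | b)) <;>
      first
        | exact Iff.rfl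
        | exact iff_of_true ⟨_, rfl⟩ trivial
        | exact iff_of_true ⟨_, rfl⟩ ⟨_, rfl⟩
        | exact iff_of_false (fun ⟨_, h⟩ => Sum.inl_ne_inr h) id
        | exact iff_of_false id (fun ⟨_, h⟩ => Sum.inl_ne_inr h)
  label_eq := by rintro ((a | a) | (a | a)) <;> rfl

def dualParIso (G H : LGraph) : Iso (G.par H).dual (G.dual.tensor H.dual) where
  toEquiv := Equiv.refl _
  adj_iff := by
    rintro (a | a) (b | b)
    exacts [and_congr Sum.inl_injective.ne_iff Iff.rfl, iff_of_true ⟨Sum.inl_ne_inr, id⟩ trivial,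
      iff_of_true ⟨Sum.inr_ne_inl, id⟩ trivial, and_congr Sum.inr_injective.ne_iff Iff.rfl]
  label_eq := by rintro (a | a) <;> rfl

def dualTensorIso (G H : LGraph) : Iso (G.tensor H).dual (G.dual.par H.dual) where
  toEquiv := Equiv.refl _
  adj_iff := by
    rintro (a | a) (b | b)
    exacts [and_congr Sum.inl_injective.ne_iff Iff.rfl, iff_of_false (fun h => h.2 trivial) id,
      iff_of_false (fun h => h.2 trivial) id, and_congr Sum.inr_injective.ne_iff Iff.rfl]
  label_eq := by rintro (a | a) <;> rfl

def dualSingleIso (a : Atom) : Iso (single a).dual (single (dualAtom a)) where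
  toEquiv := Equiv.refl _
  adj_iff _ _ := iff_of_false (fun h => h.1 rfl) id
  label_eq _ := rfl

def dualCompIso (P : LGraph) (K : P.V → LGraph) :
    Iso (P.comp K).dual (P.dual.comp fun v => (K v).dual) where
  toEquiv := Equiv.refl _
  adj_iff := by
    rintro ⟨v, a⟩ ⟨w, b⟩
    by_cases h : v = w
    · subst h
      refine Iff.trans ?_ (comp_adj_same (P := P.dual) (K := fun u => (K u).dual) a b).symm
      exact and_congr (not_congr ⟨fun e => eq_of_heq (Sigma.mk.inj_iff.mp e).2, fun e => e ▸ rfl⟩)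
        (not_congr (comp_adj_same a b))
    · refine Iff.trans ?_ (comp_adj_ne (P := P.dual) (K := fun u => (K u).dual) a b h).symm
      exact and_congr ⟨fun _ => h, fun _ e => h (Sigma.mk.inj_iff.mp e).1⟩
        (not_congr (comp_adj_ne a b h))
  label_eq _ := rfl

end LGraph

open LGraph

instance : IsEmpty LGraph.empty.V := inferInstanceAs (IsEmpty Empty)

section Derivations

variable {Rules : LGraph → LGraph → Prop} {G H K X Y : LGraph}

lemma Deriv.of_iso (f : Iso G H) : Deriv Rules G H :=
  Relation.ReflTransGen.single (Or.inl ⟨f⟩)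

lemma Deriv.trans (d₁ : Deriv Rules G H) (d₂ : Deriv Rules H K) : Deriv Rules G K :=
  Relation.ReflTransGen.trans d₁ d₂

lemma Deriv.of_rule (h : Rules X Y) : Deriv Rules X Y :=
  Relation.ReflTransGen.single <| Or.inr ⟨empty, ∅, X, Y, h,
    ⟨(emptyPlugIso empty X ∅).symm⟩, ⟨(emptyPlugIso empty Y ∅).symm⟩⟩

lemma Step.plug (C : LGraph) (S : Set C.V) (h : Step Rules X Y) :
    Step Rules (C.plug S X) (C.plug S Y) := by
  obtain ⟨D, U, p, c, hr, ⟨f⟩, ⟨g⟩⟩ := h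
  exact ⟨C.plug S D, _, p, c, hr, ⟨(plugCongr S f).trans (plugPlugIso C D p S U)⟩,
    ⟨(plugCongr S g).trans (plugPlugIso C D c S U)⟩⟩

lemma Deriv.plug (C : LGraph) (S : Set C.V) (d : Deriv Rules X Y) :
    Deriv Rules (C.plug S X) (C.plug S Y) :=
  Relation.ReflTransGen.lift (C.plug S)
    (fun _ _ h => Or.imp (fun ⟨f⟩ => ⟨plugCongr S f⟩) (Step.plug C S) h) _ _ d

lemma Deriv.par_left (B : LGraph) (d : Deriv Rules X Y) : Deriv Rules (B.par X) (B.par Y) :=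
  (Deriv.of_iso (plugEmptySetIso B X).symm).trans
    ((d.plug B ∅).trans (.of_iso (plugEmptySetIso B Y)))

lemma Deriv.provable (d : Deriv Rules G H) (h : Provable Rules G) : Provable Rules H :=
  Deriv.trans h d

lemma Provable.of_iso (h : Provable Rules G) (f : Iso G H) : Provable Rules H :=
  (Deriv.of_iso f).provable h

lemma provable_of_isEmpty (G : LGraph) [IsEmpty G.V] : Provable Rules G :=
  Deriv.of_iso (isoEmpty G).symm

lemma Provable.deriv_plug (h : Provable Rules X) (W : LGraph) (S : Set W.V) :
    Deriv Rules W (W.plug S X) :=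
  (Deriv.of_iso (plugEmptyIso W empty S).symm).trans (h.plug W S)

lemma Provable.tensor (hX : Provable Rules X) (hY : Provable Rules Y) :
    Provable Rules (X.tensor Y) :=
  ((hY.deriv_plug X Set.univ).trans (.of_iso (plugUnivIso X Y))).provable hX

lemma provable_bigTensor : ∀ {n : ℕ} {F : Fin n → LGraph}, (∀ i, Provable Rules (F i)) →
    Provable Rules (bigTensor n F)
  | 0, _, _ => Relation.ReflTransGen.refl
  | _ + 1, _, h => (h 0).tensor (provable_bigTensor fun i => h i.succ)

end Derivations

/-- An instance of ss↓, or an isomorphism when `A` or `S` is empty. -/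
lemma deriv_plug_par (B A : LGraph) (S : Set B.V) : Deriv GSRule (B.plug S A) (B.par A) := by
  rcases isEmpty_or_nonempty A.V with hA | hA
  · exact .of_iso ((plugEmptyIso B A S).trans (parEmptyIso B A).symm)
  rcases S.eq_empty_or_nonempty with rfl | hS
  · exact .of_iso (plugEmptySetIso B A)
  · exact .of_rule (GSRule.ss A B S hA hS.ne_empty)

lemma Provable.tensor_rule {A B C D : LGraph} (h₁ : Provable GSRule (A.par B))
    (h₂ : Provable GSRule (C.par D)) : Provable GSRule ((A.tensor C).par (B.par D)) := by
  have d₁ := h₂.deriv_plug (A.par B) (Set.range Sum.inl)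
  have d₂ := (deriv_plug_par (A.tensor C) D (Set.range Sum.inl)).par_left B
  exact (d₁.trans ((Deriv.of_iso (plugParParIso A B C D)).trans
    (d₂.trans (.of_iso (parLeftComm _ _ _))))).provable h₁

def ProvableImp (G H : LGraph) : Prop := Provable GSRule (G.dual.par H)

namespace ProvableImp

variable {G G' G₁ G₂ H H' H₁ H₂ : LGraph}

lemma of_iso (h : ProvableImp G H) (f : Iso G G') (g : Iso H H') : ProvableImp G' H' :=
  Provable.of_iso h (parCongr (dualCongr f) g)

lemma single (a : Atom) : ProvableImp (LGraph.single a) (LGraph.single a) :=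
  Provable.of_iso (Deriv.of_rule (GSRule.ai a)) (parCongr (dualSingleIso a).symm (Iso.refl _))

lemma par (h₁ : ProvableImp G₁ H₁) (h₂ : ProvableImp G₂ H₂) :
    ProvableImp (G₁.par G₂) (H₁.par H₂) :=
  (Provable.tensor_rule h₁ h₂).of_iso (parCongr (dualParIso G₁ G₂).symm (Iso.refl _))

lemma tensor (h₁ : ProvableImp G₁ H₁) (h₂ : ProvableImp G₂ H₂) :
    ProvableImp (G₁.tensor G₂) (H₁.tensor H₂) :=
  (Provable.tensor_rule (Provable.of_iso h₁ (parComm _ _))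
    (Provable.of_iso h₂ (parComm _ _))).of_iso
    ((parComm _ _).trans (parCongr (dualTensorIso G₁ G₂).symm (Iso.refl _)))

end ProvableImp

namespace LGraph

def CompMonotone (P : LGraph) : Prop :=
  ∀ K L : P.V → LGraph, (∀ v, Nonempty (K v).V) → (∀ v, ProvableImp (K v) (L v)) →
    ProvableImp (P.comp K) (P.comp L)

def compIsoOfSubsingleton {P : LGraph} [Subsingleton P.V] (K : P.V → LGraph) (v : P.V) :
    Iso (P.comp K) (K v) where
  toEquiv :=
    { toFun := fun x => Subsingleton.elim x.1 v ▸ x.2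
      invFun := fun a => ⟨v, a⟩
      left_inv := by rintro ⟨w, a⟩; obtain rfl := Subsingleton.elim w v; rfl
      right_inv := fun _ => rfl }
  adj_iff := by
    rintro ⟨w, a⟩ ⟨w', b⟩
    obtain rfl := Subsingleton.elim w v
    obtain rfl := Subsingleton.elim w' w
    exact comp_adj_same a b
  label_eq := by rintro ⟨w, a⟩; obtain rfl := Subsingleton.elim w v; rfl

theorem compMonotone_of_subsingleton {P : LGraph} [Subsingleton P.V] : CompMonotone P := by
  intro K L _ h
  rcases isEmpty_or_nonempty P.V with hP | hP
  · have : IsEmpty ((P.comp K).dual.par (P.comp L)).V :=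
      ⟨by rintro (⟨v, _⟩ | ⟨v, _⟩) <;> exact isEmptyElim v⟩
    exact provable_of_isEmpty _
  · obtain ⟨v⟩ := hP
    exact (h v).of_iso (compIsoOfSubsingleton K v).symm (compIsoOfSubsingleton L v).symm

/-- The labels are dummies: only compositions along this graph are used. -/
def pair (t : Prop) : LGraph where
  V := Bool
  adj u v := u ≠ v ∧ t
  symm h := ⟨h.1.symm, h.2⟩
  irrefl _ h := h.1 rfl
  label _ := (0, true)

def pairCompIso (t : Prop) (K : (pair t).V → LGraph) :
    Iso ((pair t).comp K) ((K true).plug {_v | t} (K false)) where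
  toEquiv :=
    { toFun := fun | ⟨true, x⟩ => .inl x | ⟨false, x⟩ => .inr x
      invFun := Sum.elim (fun x => ⟨true, x⟩) (fun x => ⟨false, x⟩)
      left_inv := by rintro ⟨_ | _, x⟩ <;> rfl
      right_inv := by rintro (x | x) <;> rfl }
  adj_iff := by
    rintro ⟨_ | _, x⟩ ⟨_ | _, y⟩
    · exact comp_adj_same (K := K) x y
    · exact (comp_adj_ne (K := K) x y Bool.false_ne_true).trans (and_iff_right Bool.false_ne_true)
    · exact (comp_adj_ne (K := K) x y Bool.false_ne_true.symm).trans
        (and_iff_right Bool.false_ne_true.symm)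
    · exact comp_adj_same (K := K) x y
  label_eq := by rintro ⟨_ | _, x⟩ <;> rfl

theorem compMonotone_pair (t : Prop) : CompMonotone (pair t) := by
  intro K L _ h
  refine ProvableImp.of_iso ?_ (pairCompIso t K).symm (pairCompIso t L).symm
  by_cases ht : t
  · simp only [ht, Set.ofPred_true]
    exact ((h true).tensor (h false)).of_iso (plugUnivIso _ _).symm (plugUnivIso _ _).symm
  · simp only [ht, Set.ofPred_false]
    exact ((h true).par (h false)).of_iso (plugEmptySetIso _ _).symm (plugEmptySetIso _ _).symm

theorem compMonotone_of_prime {Q : LGraph} (hQ : Q.Prime) (h4 : 4 ≤ Fintype.card Q.V) :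
    CompMonotone Q := by
  intro K L hK h
  let e := Fintype.equivFin Q.V
  have hrule := GSRule.p _ Q e (fun i => (K (e.symm i)).dual) (fun i => L (e.symm i)) hQ h4
    fun i => hK (e.symm i)
  have hM : (fun v : Q.dual.V => (K (e.symm (e v))).dual) = fun v => (K v).dual :=
    funext fun v => congrArg (fun u => (K u).dual) (e.symm_apply_apply v)
  simp only [Equiv.symm_apply_apply, hM] at hrule
  exact ((Deriv.of_rule hrule).provable (provable_bigTensor fun i => h (e.symm i))).of_iso
    (parCongr (dualCompIso Q K).symm (Iso.refl _))

/-- The fibres of `f` are modules of `P`, and `Q` is the quotient graph on them. -/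
def IsModularQuotient {P Q : LGraph} (f : P.V → Q.V) : Prop :=
  ∀ u v, f u ≠ f v → (P.adj u v ↔ Q.adj (f u) (f v))

def compFibresIso {P Q : LGraph} {f : P.V → Q.V} (hf : IsModularQuotient f)
    (K : P.V → LGraph) :
    Iso (Q.comp fun q => (P.induce {v | f v = q}).comp fun v => K v.1) (P.comp K) where
  toEquiv :=
    { toFun := fun x => ⟨x.2.1.1, x.2.2⟩
      invFun := fun x => ⟨f x.1, ⟨x.1, rfl⟩, x.2⟩
      left_inv := by rintro ⟨q, ⟨v, rfl⟩, a⟩; rfl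
      right_inv := fun _ => rfl }
  adj_iff := by
    rintro ⟨q, ⟨v, hv⟩, a⟩ ⟨q', ⟨w, hw⟩, b⟩
    by_cases hq : q = q'
    · subst hq
      refine (comp_adj_same _ _).trans ?_
      by_cases hvw : v = w
      · subst hvw
        exact (comp_adj_same (K := fun u : (P.induce {v | f v = q}).V => K u.1) a b).trans
          (comp_adj_same (K := K) a b).symm
      · exact (comp_adj_ne (K := fun u : (P.induce {v | f v = q}).V => K u.1) a b
          fun e => hvw (congrArg Subtype.val e)).trans (comp_adj_ne (K := K) a b hvw).symm
    · subst hv hw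
      exact (comp_adj_ne _ _ hq).trans
        ((hf v w hq).symm.trans (comp_adj_ne (K := K) a b fun e => hq (congrArg f e)).symm)
  label_eq := by rintro ⟨q, ⟨v, hv⟩, a⟩; rfl

theorem compMonotone_of_isModularQuotient {P Q : LGraph} {f : P.V → Q.V}
    (hf : IsModularQuotient f) (hsurj : Function.Surjective f) (hQ : CompMonotone Q)
    (hfib : ∀ q, CompMonotone (P.induce {v | f v = q})) : CompMonotone P := by
  intro K L hK h
  refine ProvableImp.of_iso ?_ (compFibresIso hf K) (compFibresIso hf L)
  refine hQ _ _ (fun q => ?_) fun q => hfib q _ _ (fun v => hK v.1) fun v => h v.1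
  obtain ⟨v, rfl⟩ := hsurj q
  exact ⟨⟨⟨v, rfl⟩, (hK v).some⟩⟩

end LGraph

namespace LGraph

variable {X Q : LGraph}

lemma adj_comm (X : LGraph) (v w : X.V) : X.adj v w ↔ X.adj w v := ⟨X.symm, X.symm⟩

lemma IsModule.union {M N : Set X.V} (hM : X.IsModule M) (hN : X.IsModule N)
    (hMN : (M ∩ N).Nonempty) : X.IsModule (M ∪ N) := by
  obtain ⟨w, hwM, hwN⟩ := hMN
  have key : ∀ v ∉ M ∪ N, ∀ z ∈ M ∪ N, (X.adj v z ↔ X.adj v w) := by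
    rintro v hv z (hz | hz)
    · exact hM v (fun h => hv (Or.inl h)) z hz w hwM
    · exact hN v (fun h => hv (Or.inr h)) z hz w hwN
  intro v hv x hx y hy
  rw [key v hv x hx, key v hv y hy]

lemma IsModularQuotient.isModule_preimage {f : X.V → Q.V} (hf : IsModularQuotient f)
    {M : Set Q.V} (hM : Q.IsModule M) : X.IsModule (f ⁻¹' M) := by
  intro v hv x hx y hy
  rw [hf v x fun h => hv (show f v ∈ M from h ▸ hx), hf v y fun h => hv (show f v ∈ M from h ▸ hy),
    hM (f v) hv (f x) hx (f y) hy]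

def IsProperModule (X : LGraph) (A : Set X.V) : Prop :=
  X.IsModule A ∧ A.Nonempty ∧ A ≠ Set.univ

/-- `X` is neither a par nor a tensor of two nonempty graphs. -/
def NoSplit (X : LGraph) : Prop :=
  ∀ A : Set X.V, A.Nonempty → A ≠ Set.univ → ∀ t : Prop, ¬ ∀ a ∈ A, ∀ b ∉ A, (X.adj a b ↔ t)

lemma NoSplit.of_isModularQuotient {f : X.V → Q.V} (hX : X.NoSplit) (hf : IsModularQuotient f)
    (hsurj : Function.Surjective f) : Q.NoSplit := by
  intro A hA hAu t ht
  obtain ⟨q, hq⟩ := (Set.ne_univ_iff_exists_notMem A).mp hAu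
  obtain ⟨v, rfl⟩ := hsurj q
  refine hX (f ⁻¹' A) (hA.preimage hsurj) (fun h => hq (h ▸ Set.mem_univ v : v ∈ f ⁻¹' A)) t
    fun a ha b hb => (hf a b fun h => hb (show f b ∈ A from h ▸ ha)).trans (ht _ ha _ hb)

lemma NoSplit.card_ne_two (hX : X.NoSplit) : Fintype.card X.V ≠ 2 := by
  classical
  intro h
  obtain ⟨a, b, hab, huniv⟩ := Finset.card_eq_two.mp ((Finset.card_univ).trans h)
  have hall : ∀ v, v = a ∨ v = b := fun v => by simpa [huniv] using Finset.mem_univ v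
  refine hX {a} ⟨a, rfl⟩ (fun h => hab.symm (h ▸ Set.mem_univ b : b ∈ ({a} : Set X.V)))
    (X.adj a b) ?_
  rintro _ rfl c hc
  obtain rfl := (hall c).resolve_left hc
  rfl

lemma Prime.card_ne_three (hX : X.Prime) : Fintype.card X.V ≠ 3 := by
  classical
  intro h
  obtain ⟨a, b, c, hab, hac, hbc, huniv⟩ := Finset.card_eq_three.mp ((Finset.card_univ).trans h)
  have hall : ∀ v, v = a ∨ v = b ∨ v = c := fun v => by simpa [huniv] using Finset.mem_univ v
  -- Two of the three vertices are twins with respect to the third, forming a nontrivial module.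
  have twins : ∀ x y z : X.V, x ≠ y → x ≠ z → y ≠ z → (∀ v, v = x ∨ v = y ∨ v = z) →
      ¬ (X.adj z x ↔ X.adj z y) := by
    intro x y z hxy hxz hyz hall hz
    have hmod : X.IsModule {x, y} := by
      intro v hv u hu w hw
      obtain rfl : v = z := by rcases hall v with rfl | rfl | rfl <;> simp_all
      rcases hu with rfl | rfl <;> rcases hw with rfl | rfl <;> tauto
    rcases hX.2 _ hmod with h | ⟨u, h⟩ | h
    · exact (Set.insert_nonempty x {y}).ne_empty h
    · have hx : x ∈ ({u} : Set X.V) := h ▸ Set.mem_insert x {y}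
      have hy : y ∈ ({u} : Set X.V) := h ▸ Set.mem_insert_of_mem x rfl
      exact hxy (hx.trans hy.symm)
    · rcases (h ▸ Set.mem_univ z : z ∈ ({x, y} : Set X.V)) with h | h
      exacts [hxz h.symm, hyz h.symm]
  have h₁ := twins a b c hab hac hbc hall
  have h₂ := twins a c b hac hab hbc.symm fun v => by rcases hall v with h | h | h <;> simp [h]
  have h₃ := twins b c a hbc hab.symm hac.symm fun v => by rcases hall v with h | h | h <;> simp [h]
  rw [adj_comm X c a, adj_comm X c b] at h₁
  rw [adj_comm X b a] at h₂
  tauto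

lemma NoSplit.union_ne_univ (hX : X.NoSplit) {M N : Set X.V} (hM : X.IsProperModule M)
    (hN : X.IsProperModule N) : M ∪ N ≠ Set.univ := by
  intro hMN
  have hall := Set.eq_univ_iff_forall.mp hMN
  obtain ⟨u, hu⟩ := (Set.ne_univ_iff_exists_notMem N).mp hN.2.2
  obtain ⟨w, hw⟩ := (Set.ne_univ_iff_exists_notMem M).mp hM.2.2
  have huM : u ∈ M := (hall u).resolve_right hu
  have hwN : w ∈ N := (hall w).resolve_left hw
  -- All edges leaving `M \ N` end in `N`, so they behave like the edge `u w`.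
  refine hX (M \ N) ⟨u, huM, hu⟩ (fun h => hw (h ▸ Set.mem_univ w : w ∈ M \ N).1) (X.adj u w) ?_
  intro a ha b hb
  have hbN : b ∈ N := by_contra fun hbN => hb ⟨(hall b).resolve_right hbN, hbN⟩
  calc X.adj a b ↔ X.adj a w := hN.1 a ha.2 b hbN w hwN
    _ ↔ X.adj w a := adj_comm X a w
    _ ↔ X.adj w u := hM.1 w hw a ha.1 u huM
    _ ↔ X.adj u w := adj_comm X w u

lemma NoSplit.eq_of_maximal (hX : X.NoSplit) {A B : Set X.V} (hA : Maximal X.IsProperModule A)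
    (hB : Maximal X.IsProperModule B) {v : X.V} (hvA : v ∈ A) (hvB : v ∈ B) : A = B := by
  have hAB : X.IsProperModule (A ∪ B) :=
    ⟨hA.prop.1.union hB.prop.1 ⟨v, hvA, hvB⟩, ⟨v, Or.inl hvA⟩, hX.union_ne_univ hA.prop hB.prop⟩
  exact (hA.eq_of_subset hAB Set.subset_union_left).trans
    (hB.eq_of_subset hAB Set.subset_union_right).symm

lemma exists_maximal_properModule (h2 : 2 ≤ Fintype.card X.V) (v : X.V) :
    ∃ A, Maximal X.IsProperModule A ∧ v ∈ A := by
  obtain ⟨w, hw⟩ := Fintype.exists_ne_of_one_lt_card h2 v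
  have hv : X.IsProperModule {v} :=
    ⟨fun _ _ x hx y hy => by rw [Set.mem_singleton_iff.mp hx, Set.mem_singleton_iff.mp hy],
      ⟨v, rfl⟩, fun h => hw (h ▸ Set.mem_univ w : w ∈ ({v} : Set X.V))⟩
  obtain ⟨A, hvA, hA⟩ := Finite.exists_le_maximal hv
  exact ⟨A, hA, hvA rfl⟩

noncomputable def quot (X : LGraph) : LGraph where
  V := {A : Set X.V // Maximal X.IsProperModule A}
  fintype := Fintype.ofFinite _
  adj A B := A ≠ B ∧ ∃ a ∈ A.1, ∃ b ∈ B.1, X.adj a b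
  symm := fun ⟨h, a, ha, b, hb, hab⟩ => ⟨Ne.symm h, b, hb, a, ha, X.symm hab⟩
  irrefl _ h := h.1 rfl
  label _ := (0, true)

noncomputable def classOf (h2 : 2 ≤ Fintype.card X.V) (v : X.V) : (quot X).V :=
  ⟨_, (exists_maximal_properModule h2 v).choose_spec.1⟩

lemma mem_classOf (h2 : 2 ≤ Fintype.card X.V) (v : X.V) : v ∈ (classOf h2 v).1 :=
  (exists_maximal_properModule h2 v).choose_spec.2

section NoSplit

variable (hX : X.NoSplit) (h2 : 2 ≤ Fintype.card X.V)
include hX h2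

lemma NoSplit.classOf_eq {v : X.V} {A : (quot X).V} (hv : v ∈ A.1) : classOf h2 v = A :=
  Subtype.ext (hX.eq_of_maximal (classOf h2 v).2 A.2 (mem_classOf h2 v) hv)

lemma NoSplit.classOf_surjective : Function.Surjective (classOf h2) := fun A =>
  let ⟨a, ha⟩ := A.2.prop.2.1
  ⟨a, hX.classOf_eq h2 ha⟩

lemma NoSplit.isModularQuotient_classOf : IsModularQuotient (classOf h2) := by
  intro u v huv
  refine ⟨fun h => ⟨huv, u, mem_classOf h2 u, v, mem_classOf h2 v, h⟩, ?_⟩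
  rintro ⟨-, a, ha, b, hb, hab⟩
  have hbu : b ∉ (classOf h2 u).1 := fun h =>
    huv ((hX.classOf_eq h2 h).symm.trans (hX.classOf_eq h2 hb))
  have hbu' : X.adj b u :=
    ((classOf h2 u).2.prop.1 b hbu a ha u (mem_classOf h2 u)).mp (X.symm hab)
  exact ((classOf h2 v).2.prop.1 u (fun h => huv (hX.classOf_eq h2 h)) b hb v
    (mem_classOf h2 v)).mp (X.symm hbu')

lemma NoSplit.quot_prime : (quot X).Prime := by
  have hsurj := hX.classOf_surjective h2
  obtain ⟨v⟩ := Fintype.card_pos_iff.mp (by omega : 0 < Fintype.card X.V)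
  obtain ⟨w, hw⟩ := (Set.ne_univ_iff_exists_notMem _).mp (classOf h2 v).2.prop.2.2
  refine ⟨Fintype.one_lt_card_iff.mpr ⟨classOf h2 v, classOf h2 w,
    fun h => hw (h ▸ mem_classOf h2 w)⟩, fun M hM => ?_⟩
  rcases M.subsingleton_or_nontrivial with hMs | ⟨A, hA, B, hB, hAB⟩
  · exact hMs.eq_empty_or_singleton.imp_right Or.inl
  refine Or.inr (Or.inr (by_contra fun hMu => hAB ?_))
  -- Otherwise the modules in `M` would together form a proper module strictly above `A`.
  have hU := (hX.isModularQuotient_classOf h2).isModule_preimage hM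
  have hsub : A.1 ⊆ classOf h2 ⁻¹' M := fun a ha =>
    show classOf h2 a ∈ M from (hX.classOf_eq h2 ha) ▸ hA
  have hUu : classOf h2 ⁻¹' M ≠ Set.univ := fun h => hMu <| Set.eq_univ_of_forall fun C => by
    obtain ⟨c, rfl⟩ := hsurj C
    exact (h ▸ Set.mem_univ c : c ∈ classOf h2 ⁻¹' M)
  have hAU := A.2.eq_of_subset ⟨hU, A.2.prop.2.1.mono hsub, hUu⟩ hsub
  obtain ⟨b, hb⟩ := B.2.prop.2.1
  have hbA : b ∈ A.1 := hAU ▸ (show classOf h2 b ∈ M from (hX.classOf_eq h2 hb) ▸ hB)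
  exact (hX.classOf_eq h2 hbA).symm.trans (hX.classOf_eq h2 hb)

lemma NoSplit.four_le_card_quot : 4 ≤ Fintype.card (quot X).V := by
  have h₂ := (hX.of_isModularQuotient (hX.isModularQuotient_classOf h2)
    (hX.classOf_surjective h2)).card_ne_two
  have h₃ := (hX.quot_prime h2).card_ne_three
  have := (hX.quot_prime h2).1
  omega

end NoSplit

theorem exists_compMonotone_isModularQuotient (h2 : 2 ≤ Fintype.card X.V) :
    ∃ (Q : LGraph) (f : X.V → Q.V), IsModularQuotient f ∧ Function.Surjective f ∧
      Nontrivial Q.V ∧ CompMonotone Q := by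
  classical
  by_cases hX : X.NoSplit
  · have h4 := hX.four_le_card_quot h2
    exact ⟨quot X, classOf h2, hX.isModularQuotient_classOf h2, hX.classOf_surjective h2,
      Fintype.one_lt_card_iff_nontrivial.mp (by omega), compMonotone_of_prime (hX.quot_prime h2) h4⟩
  simp only [NoSplit] at hX
  push Not at hX
  obtain ⟨A, ⟨a, ha⟩, hAu, t, hA⟩ := hX
  obtain ⟨b, hb⟩ := (Set.ne_univ_iff_exists_notMem A).mp hAu
  refine ⟨pair t, fun v => decide (v ∈ A), fun u v huv => ?_, ?_,
    inferInstanceAs (Nontrivial Bool), compMonotone_pair t⟩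
  · by_cases hu : u ∈ A <;> by_cases hv : v ∈ A <;>
      simp only [hu, hv, decide_true, decide_false] at huv ⊢
    · exact absurd rfl huv
    · exact (hA u hu v hv).trans (and_iff_right huv).symm
    · exact (adj_comm X u v).trans ((hA v hv u hu).trans (and_iff_right huv).symm)
    · exact absurd rfl huv
  · rintro (_ | _)
    exacts [⟨b, decide_eq_false hb⟩, ⟨a, decide_eq_true ha⟩]

end LGraph

namespace LGraph

theorem compMonotone (P : LGraph) : CompMonotone P := by
  rcases le_or_gt (Fintype.card P.V) 1 with h1 | h2
  · have := Fintype.card_le_one_iff_subsingleton.mp h1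
    exact compMonotone_of_subsingleton
  · obtain ⟨Q, f, hf, hsurj, _, hQ⟩ := exists_compMonotone_isModularQuotient h2
    exact compMonotone_of_isModularQuotient hf hsurj hQ fun q => compMonotone _
termination_by Fintype.card P.V
decreasing_by
  obtain ⟨q', hq'⟩ := exists_ne q
  obtain ⟨v, rfl⟩ := hsurj q'
  exact card_induce_lt fun h => hq' (h ▸ Set.mem_univ v : v ∈ {v | f v = q})

def compSingleIso (P : LGraph) : Iso P (P.comp fun v => single (P.label v)) where
  toEquiv :=
    { toFun := fun v => ⟨v, ()⟩
      invFun := Sigma.fst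
      left_inv := fun _ => rfl
      right_inv := fun _ => rfl }
  adj_iff v w := by
    by_cases h : v = w
    · subst h
      exact iff_of_false (P.irrefl v) (comp_adj_same (K := fun v => single (P.label v)) () ()).mp
    · exact (comp_adj_ne (K := fun v => single (P.label v)) () () h).symm
  label_eq _ := rfl

def plugCompIso (C : LGraph) (R : Set C.V) (a : Atom) (Y : LGraph) :
    Iso (C.plug R Y)
      ((C.plug R (single a)).comp (Sum.elim (fun c => single (C.label c)) fun _ => Y)) where
  toEquiv :=
    { toFun := Sum.elim (fun c => ⟨.inl c, ()⟩) fun y => ⟨.inr (), y⟩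
      invFun := fun | ⟨.inl c, _⟩ => .inl c | ⟨.inr (), y⟩ => .inr y
      left_inv := by rintro (c | y) <;> rfl
      right_inv := by rintro ⟨c | ⟨⟩, x⟩ <;> rfl }
  adj_iff := by
    let K : (C.plug R (single a)).V → LGraph := Sum.elim (fun c => single (C.label c)) fun _ => Y
    rintro (c | y) (c' | y')
    · by_cases h : c = c'
      · subst h
        exact iff_of_false (C.irrefl c) (comp_adj_same (K := K) (v := .inl c) () ()).mp
      · exact (comp_adj_ne (K := K) (v := .inl c) (w := .inl c') () ()
          (Sum.inl_injective.ne h)).symm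
    · exact (comp_adj_ne (K := K) (v := .inl c) (w := .inr ()) () y' Sum.inl_ne_inr).symm
    · exact (comp_adj_ne (K := K) (v := .inr ()) (w := .inl c') y () Sum.inr_ne_inl).symm
    · exact (comp_adj_same (K := K) (v := .inr ()) y y').symm
  label_eq := by rintro (c | y) <;> rfl

end LGraph

namespace ProvableImp

variable {G H : LGraph}

theorem refl (X : LGraph) : ProvableImp X X :=
  (compMonotone X _ _ (fun _ => ⟨()⟩) fun v => .single (X.label v)).of_iso
    (compSingleIso X).symm (compSingleIso X).symm

theorem plug_of_nonempty (h : ProvableImp G H) [Nonempty G.V] (C : LGraph) (R : Set C.V) :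
    ProvableImp (C.plug R G) (C.plug R H) := by
  refine (compMonotone (C.plug R (LGraph.single (0, true))) _ _ ?_ ?_).of_iso
    (plugCompIso C R _ G).symm (plugCompIso C R _ H).symm
  · rintro (_ | _)
    exacts [⟨()⟩, ‹Nonempty G.V›]
  · rintro (_ | _)
    exacts [.single _, h]

theorem plug_of_isEmpty (h : ProvableImp G H) [IsEmpty G.V] (C : LGraph) (R : Set C.V) :
    ProvableImp (C.plug R G) (C.plug R H) := by
  have : IsEmpty G.dual.V := ‹IsEmpty G.V›
  have hH : Provable GSRule H := Provable.of_iso h (emptyParIso G.dual H)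
  exact ProvableImp.of_iso (((hH.deriv_plug C R).par_left C.dual).provable (refl C))
    (plugEmptyIso C G R).symm (Iso.refl _)

end ProvableImp

/-- **Context closure of implication.** For all graphs `G` and `H`
and every context `C[·]_R`, if `G ⊸ H` (that is, `Ḡ ⅋ H`) is provable in GS, then
`C[G]_R ⊸ C[H]_R` is provable in GS. -/
theorem implication_context_closure (G H C : LGraph) (R : Set C.V)
    (h : Provable GSRule (G.dual.par H)) :
    Provable GSRule ((C.plug R G).dual.par (C.plug R H)) := by
  rcases isEmpty_or_nonempty G.V with hG | hG
  · exact ProvableImp.plug_of_isEmpty h C R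
  · exact ProvableImp.plug_of_nonempty h C R

end GSP
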